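/- Let s, l be positive integers with l ≥ 2, let X ∈ M_{s×l}(ℤ) be a matrix all of whose rows sum to 0, and let X' ∈ M_{s×(l−1)}(ℤ) be the matrix obtained from X by deleting its first column. Then for every k ≥ 1, the greatest common divisor of all k×k minors of X equals the greatest common divisor of all k×k minors of X'. Consequently, X and X' have the same rank and the same invariant factors. -/

import Mathlib

open Matrix

/-- A matrix `A ∈ M_{s×l}(ℤ)` is in Smith normal form: it is diagonal, and there is `r`
such that the first `r` diagonal entries are positive, the remaining ones vanish, and
consecutive diagonal entries divide each other. -/
def IsSNF {s l : ℕ} (A : Matrix (Fin s) (Fin l) ℤ) : Prop :=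
  (∀ (i : Fin s) (j : Fin l), (i : ℕ) ≠ (j : ℕ) → A i j = 0) ∧
  ∃ r : ℕ,
    (∀ (i : Fin s) (j : Fin l), (i : ℕ) = (j : ℕ) →
      ((i : ℕ) < r → 0 < A i j) ∧ (r ≤ (i : ℕ) → A i j = 0)) ∧
    (∀ (i i' : Fin s) (j j' : Fin l), (i : ℕ) = (j : ℕ) → (i' : ℕ) = (j' : ℕ) →
      (i : ℕ) + 1 = (i' : ℕ) → A i j ∣ A i' j')

/-- The matrix obtained from `A` by erasing its first column. -/
def eraseFirstCol {s l : ℕ} (A : Matrix (Fin s) (Fin l) ℤ) :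
    Matrix (Fin s) (Fin (l - 1)) ℤ :=
  Matrix.of fun i j => A i ⟨(j : ℕ) + 1, by have := j.isLt; omega⟩

/-- A matrix `A` with `A·𝟙 = 0` is in homogeneous Smith normal form if the matrix obtained
from `A` by erasing its first column is in Smith normal form. -/
def IsHSNF {s l : ℕ} (A : Matrix (Fin s) (Fin l) ℤ) : Prop :=
  A *ᵥ 1 = 0 ∧ IsSNF (eraseFirstCol A)

/-- The (normalized, nonnegative) greatest common divisor of all `k×k` minors of an integer
matrix: the gcd of the determinants of all `k×k` submatrices obtained by choosing `k`
distinct rows and `k` distinct columns. -/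
noncomputable def gcdMinors {s l : ℕ} (k : ℕ) (X : Matrix (Fin s) (Fin l) ℤ) : ℤ :=
  Finset.univ.gcd fun p : (Fin k ↪ Fin s) × (Fin k ↪ Fin l) =>
    (X.submatrix ⇑p.1 ⇑p.2).det

/-!
Erasing the first column is right multiplication by a `0/1` matrix, and since the rows of `X` sum
to zero, `X` is recovered from `X'` by right multiplication with the matrix whose first column is
`-1` and whose other columns form the identity. Every `k×k` minor of a product `X * R` is an
integer combination of `k×k` minors of `X` (the easy half of Cauchy–Binet), so `X` and `X'` have
the same gcd of `k×k` minors, and the same rank.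

For a matrix in Smith normal form with diagonal `d₀ ∣ d₁ ∣ ⋯`, the gcd of the `k×k` minors is
`d₀ ⋯ d_{k-1}`. These gcds are invariant under unimodular row and column operations, so the Smith
diagonals of `X` and `X'` have the same partial products, hence coincide.
-/

open Finset

theorem Matrix.det_mul_eq_sum_det_submatrix {R n : Type*} [CommRing R] [Fintype n]
    [DecidableEq n] {k : ℕ} (A : Matrix (Fin k) n R) (B : Matrix n (Fin k) R) :
    (A * B).det = ∑ f : Fin k → n, (∏ j, B (f j) j) * (A.submatrix id f).det := by
  simp only [det_apply', mul_apply, prod_univ_sum, mul_sum, Fintype.piFinset_univ]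
  rw [sum_comm]
  refine sum_congr rfl fun f _ => sum_congr rfl fun σ _ => ?_
  simp only [submatrix_apply, id, prod_mul_distrib]
  ring

theorem Matrix.dvd_det_mul_of_forall_dvd_det_submatrix {R n : Type*} [CommRing R] [Fintype n]
    [DecidableEq n] {k : ℕ} {d : R} (A : Matrix (Fin k) n R) (B : Matrix n (Fin k) R)
    (h : ∀ f : Fin k ↪ n, d ∣ (A.submatrix id f).det) : d ∣ (A * B).det := by
  rw [det_mul_eq_sum_det_submatrix]
  refine dvd_sum fun f _ => Dvd.dvd.mul_left ?_ _
  by_cases hf : Function.Injective f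
  · exact h ⟨f, hf⟩
  · obtain ⟨i, j, hfij, hij⟩ : ∃ i j, f i = f j ∧ i ≠ j := by
      simpa [Function.Injective] using hf
    rw [det_zero_of_column_eq hij fun r => by simp [hfij]]
    exact dvd_zero d

theorem Matrix.prod_dvd_det_of_forall_dvd {R n : Type*} [CommRing R] [Fintype n] [DecidableEq n]
    (M : Matrix n n R) (d : n → R) (h : ∀ i j, d j ∣ M i j) : ∏ j, d j ∣ M.det := by
  choose N hN using h
  have hM : M = of N * diagonal d := by
    ext i j
    simp [mul_diagonal, hN i j, mul_comm]
  rw [hM, det_mul, det_diagonal]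
  exact dvd_mul_left _ _

theorem Finset.prod_range_card_dvd_prod {M : Type*} [CommMonoid M] {D : ℕ → M}
    (hD : ∀ n, D n ∣ D (n + 1)) (S : Finset ℕ) : ∏ t ∈ range #S, D t ∣ ∏ n ∈ S, D n := by
  induction S using Finset.induction_on_max with
  | empty => simp
  | insert a T hlt ih =>
    have ha : a ∉ T := fun h => lt_irrefl a (hlt a h)
    have hcard : #T ≤ a := by
      simpa using card_le_card (fun x hx => mem_range.2 (hlt x hx) : T ⊆ range a)
    rw [card_insert_of_notMem ha, prod_range_succ, prod_insert ha, mul_comm]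
    exact mul_dvd_mul (Nat.rel_of_forall_rel_succ_of_le (· ∣ ·) hD hcard) ih

theorem eq_of_forall_prod_range_eq {R : Type*} [CommRing R] [IsDomain R] {f g : ℕ → R}
    (hf : ∀ n, f n ∣ f (n + 1)) (hg : ∀ n, g n ∣ g (n + 1))
    (h : ∀ k, ∏ t ∈ range k, f t = ∏ t ∈ range k, g t) : f = g := by
  funext n
  have hsucc := h (n + 1)
  rw [prod_range_succ, prod_range_succ, h n] at hsucc
  by_cases hzero : ∏ t ∈ range n, g t = 0
  · have vanish : ∀ u : ℕ → R, (∀ n, u n ∣ u (n + 1)) → ∏ t ∈ range n, u t = 0 → u n = 0 := by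
      intro u hu hu0
      obtain ⟨t, ht, hut⟩ := prod_eq_zero_iff.1 hu0
      exact zero_dvd_iff.1 (hut ▸ Nat.rel_of_forall_rel_succ_of_le (· ∣ ·) hu (mem_range.1 ht).le)
    rw [vanish f hf (h n ▸ hzero), vanish g hg hzero]
  · exact mul_left_cancel₀ hzero hsucc

section

variable {s l s' l' : ℕ}

theorem gcdMinors_nonneg (k : ℕ) (X : Matrix (Fin s) (Fin l) ℤ) : 0 ≤ gcdMinors k X := by
  rw [gcdMinors, ← Finset.normalize_gcd, ← Int.abs_eq_normalize]
  exact abs_nonneg _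

theorem gcdMinors_dvd_det_submatrix {k : ℕ} (X : Matrix (Fin s) (Fin l) ℤ) (r : Fin k ↪ Fin s)
    (c : Fin k ↪ Fin l) : gcdMinors k X ∣ (X.submatrix r c).det :=
  Finset.gcd_dvd (f := fun p : (Fin k ↪ Fin s) × (Fin k ↪ Fin l) => (X.submatrix p.1 p.2).det)
    (mem_univ (r, c))

theorem dvd_gcdMinors_iff {k : ℕ} {d : ℤ} {X : Matrix (Fin s) (Fin l) ℤ} :
    d ∣ gcdMinors k X ↔ ∀ (r : Fin k ↪ Fin s) (c : Fin k ↪ Fin l), d ∣ (X.submatrix r c).det := by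
  simp [gcdMinors, Finset.dvd_gcd_iff]

theorem gcdMinors_dvd_transpose (k : ℕ) (X : Matrix (Fin s) (Fin l) ℤ) :
    gcdMinors k X ∣ gcdMinors k Xᵀ :=
  dvd_gcdMinors_iff.2 fun r c => by
    rw [← transpose_submatrix, det_transpose]
    exact gcdMinors_dvd_det_submatrix X c r

theorem gcdMinors_dvd_mul_right (k : ℕ) (X : Matrix (Fin s) (Fin l) ℤ)
    (R : Matrix (Fin l) (Fin l') ℤ) : gcdMinors k X ∣ gcdMinors k (X * R) :=
  dvd_gcdMinors_iff.2 fun r c => by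
    rw [submatrix_mul X R r id c Function.bijective_id]
    exact dvd_det_mul_of_forall_dvd_det_submatrix _ _ fun f => gcdMinors_dvd_det_submatrix X r f

theorem gcdMinors_dvd_mul_left (k : ℕ) (Q : Matrix (Fin s') (Fin s) ℤ)
    (X : Matrix (Fin s) (Fin l) ℤ) : gcdMinors k X ∣ gcdMinors k (Q * X) :=
  calc gcdMinors k X ∣ gcdMinors k Xᵀ := gcdMinors_dvd_transpose k X
    _ ∣ gcdMinors k (Xᵀ * Qᵀ) := gcdMinors_dvd_mul_right k _ _
    _ ∣ gcdMinors k (Xᵀ * Qᵀ)ᵀ := gcdMinors_dvd_transpose k _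
    _ = gcdMinors k (Q * X) := by rw [← transpose_mul, transpose_transpose]

theorem gcdMinors_units_mul_mul (k : ℕ) (Q : GL (Fin s) ℤ) (X : Matrix (Fin s) (Fin l) ℤ)
    (P : GL (Fin l) ℤ) :
    gcdMinors k ((Q : Matrix (Fin s) (Fin s) ℤ) * X * (P : Matrix (Fin l) (Fin l) ℤ)) =
      gcdMinors k X := by
  have hX : X = ((Q⁻¹ : GL (Fin s) ℤ) : Matrix (Fin s) (Fin s) ℤ) *
      ((Q : Matrix (Fin s) (Fin s) ℤ) * X * (P : Matrix (Fin l) (Fin l) ℤ)) *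
      ((P⁻¹ : GL (Fin l) ℤ) : Matrix (Fin l) (Fin l) ℤ) := by
    simp only [← Matrix.mul_assoc, Units.inv_mul, Matrix.one_mul]
    simp only [Matrix.mul_assoc, Units.mul_inv, Matrix.mul_one]
  refine Int.dvd_antisymm (gcdMinors_nonneg _ _) (gcdMinors_nonneg _ _) ?_ ?_
  · conv_rhs => rw [hX]
    exact (gcdMinors_dvd_mul_left k _ _).trans (gcdMinors_dvd_mul_right k _ _)
  · exact (gcdMinors_dvd_mul_left k _ _).trans (gcdMinors_dvd_mul_right k _ _)

theorem eraseFirstCol_eq_submatrix {m : ℕ} (X : Matrix (Fin s) (Fin (m + 1)) ℤ) :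
    eraseFirstCol X = X.submatrix id Fin.succ :=
  rfl

theorem exists_mul_eq_eraseFirstCol {m : ℕ} (X : Matrix (Fin s) (Fin (m + 1)) ℤ) :
    ∃ S : Matrix (Fin (m + 1)) (Fin (m + 1 - 1)) ℤ, X * S = eraseFirstCol X :=
  ⟨(1 : Matrix (Fin (m + 1)) (Fin (m + 1)) ℤ).submatrix id Fin.succ, by
    rw [eraseFirstCol_eq_submatrix]
    exact mul_submatrix_one (Equiv.refl _) Fin.succ X⟩

theorem exists_eraseFirstCol_mul_eq {m : ℕ} (X : Matrix (Fin s) (Fin (m + 1)) ℤ)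
    (hX : X *ᵥ 1 = 0) :
    ∃ R : Matrix (Fin (m + 1 - 1)) (Fin (m + 1)) ℤ, eraseFirstCol X * R = X := by
  refine ⟨of fun c : Fin m => Fin.cons (-1) ((1 : Matrix (Fin m) (Fin m) ℤ) c), ?_⟩
  rw [eraseFirstCol_eq_submatrix]
  ext i j
  cases j using Fin.cases with
  | zero =>
    have hrow : X i 0 + ∑ c : Fin m, X i c.succ = 0 := by
      simpa [mulVec, dotProduct, Fin.sum_univ_succ] using congrFun hX i
    simp only [mul_apply, submatrix_apply, id_eq, of_apply, Fin.cons_zero, mul_neg, mul_one,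
      sum_neg_distrib]
    linarith
  | succ j => simp [mul_apply, one_apply]

/-- Padding the diagonal by zeros beyond `min s l` keeps the divisibility chain of a Smith normal
form intact. -/
def diagSeq (A : Matrix (Fin s) (Fin l) ℤ) (n : ℕ) : ℤ :=
  if h : n < s ∧ n < l then A ⟨n, h.1⟩ ⟨n, h.2⟩ else 0

theorem diagSeq_of_lt (A : Matrix (Fin s) (Fin l) ℤ) {n : ℕ} (hs : n < s) (hl : n < l) :
    diagSeq A n = A ⟨n, hs⟩ ⟨n, hl⟩ :=
  dif_pos ⟨hs, hl⟩

namespace IsSNF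

variable {A : Matrix (Fin s) (Fin l) ℤ}

theorem diagSeq_dvd_succ (hA : IsSNF A) (n : ℕ) : diagSeq A n ∣ diagSeq A (n + 1) := by
  obtain ⟨-, r, -, hdvd⟩ := hA
  by_cases h : n + 1 < s ∧ n + 1 < l
  · rw [diagSeq_of_lt A (by omega) (by omega), diagSeq_of_lt A h.1 h.2]
    exact hdvd _ _ _ _ rfl rfl rfl
  · rw [show diagSeq A (n + 1) = 0 from dif_neg h]
    exact dvd_zero _

theorem diagSeq_nonneg (hA : IsSNF A) (n : ℕ) : 0 ≤ diagSeq A n := by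
  obtain ⟨-, r, hpos, -⟩ := hA
  unfold diagSeq
  split_ifs with h
  · rcases lt_or_ge n r with hr | hr
    · exact ((hpos _ _ rfl).1 hr).le
    · exact ((hpos _ _ rfl).2 hr).ge
  · exact le_rfl

theorem diagSeq_dvd_apply (hA : IsSNF A) (i : Fin s) (j : Fin l) : diagSeq A j ∣ A i j := by
  by_cases hij : (i : ℕ) = j
  · rw [diagSeq_of_lt A (hij ▸ i.isLt) j.isLt]
    exact dvd_of_eq (congrArg₂ A (Fin.ext hij.symm) rfl)
  · rw [hA.1 i j hij]
    exact dvd_zero _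

theorem det_submatrix_castLEEmb (hA : IsSNF A) {k : ℕ} (hks : k ≤ s) (hkl : k ≤ l) :
    (A.submatrix (Fin.castLEEmb hks) (Fin.castLEEmb hkl)).det = ∏ t ∈ range k, diagSeq A t := by
  have hdiag : A.submatrix (Fin.castLEEmb hks) (Fin.castLEEmb hkl) =
      diagonal fun t : Fin k => diagSeq A t := by
    ext i j
    by_cases hij : i = j
    · subst hij
      rw [diagonal_apply_eq, diagSeq_of_lt A (i.isLt.trans_le hks) (i.isLt.trans_le hkl)]
      rfl
    · rw [diagonal_apply_ne _ hij]
      exact hA.1 _ _ fun h => hij (Fin.ext h)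
  rw [hdiag, det_diagonal, Fin.prod_univ_eq_prod_range (diagSeq A)]

theorem gcdMinors_eq (hA : IsSNF A) (k : ℕ) : gcdMinors k A = ∏ t ∈ range k, diagSeq A t := by
  refine Int.dvd_antisymm (gcdMinors_nonneg _ _) (prod_nonneg fun t _ => hA.diagSeq_nonneg t)
    ?_ (dvd_gcdMinors_iff.2 fun r c => ?_)
  · by_cases hk : k ≤ s ∧ k ≤ l
    · rw [← hA.det_submatrix_castLEEmb hk.1 hk.2]
      exact gcdMinors_dvd_det_submatrix _ _ _
    · have hmin : diagSeq A (min s l) = 0 := dif_neg (by omega)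
      rw [prod_eq_zero (mem_range.2 (by omega)) hmin]
      exact dvd_zero _
  · have hcols : ∏ t ∈ range k, diagSeq A t ∣ ∏ j, diagSeq A (c j) := by
      simpa using prod_range_card_dvd_prod hA.diagSeq_dvd_succ (univ.map (c.trans Fin.valEmbedding))
    exact hcols.trans (prod_dvd_det_of_forall_dvd _ _ fun i j => hA.diagSeq_dvd_apply (r i) (c j))

theorem diagSeq_eq_of_gcdMinors_eq {B : Matrix (Fin s') (Fin l') ℤ} (hA : IsSNF A) (hB : IsSNF B)
    (h : ∀ k, gcdMinors k A = gcdMinors k B) : diagSeq A = diagSeq B :=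
  eq_of_forall_prod_range_eq hA.diagSeq_dvd_succ hB.diagSeq_dvd_succ fun k => by
    rw [← hA.gcdMinors_eq, ← hB.gcdMinors_eq, h]

end IsSNF

end

/-- For a matrix `X` all of whose rows sum to zero, the gcd of the `k×k` minors of `X`
equals the gcd of the `k×k` minors of the matrix `X'` obtained by deleting the first column
of `X`, for every `k ≥ 1`. Consequently `X` and `X'` have the same rank and the same
invariant factors (equal diagonals of their Smith normal forms). -/
theorem gcd_minors_eraseFirstCol (s l : ℕ) (hl : 2 ≤ l)
    (X : Matrix (Fin s) (Fin l) ℤ) (hX : X *ᵥ 1 = 0) :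
    (∀ k : ℕ, 1 ≤ k → gcdMinors k X = gcdMinors k (eraseFirstCol X)) ∧
    X.rank = (eraseFirstCol X).rank ∧
    (∀ (Q₁ : Matrix.GeneralLinearGroup (Fin s) ℤ)
        (P₁ : Matrix.GeneralLinearGroup (Fin l) ℤ)
        (Q₂ : Matrix.GeneralLinearGroup (Fin s) ℤ)
        (P₂ : Matrix.GeneralLinearGroup (Fin (l - 1)) ℤ),
      IsSNF ((Q₁ : Matrix (Fin s) (Fin s) ℤ) * X *
        ((P₁⁻¹ : Matrix.GeneralLinearGroup (Fin l) ℤ) : Matrix (Fin l) (Fin l) ℤ)) →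
      IsSNF ((Q₂ : Matrix (Fin s) (Fin s) ℤ) * eraseFirstCol X *
        ((P₂⁻¹ : Matrix.GeneralLinearGroup (Fin (l - 1)) ℤ) :
          Matrix (Fin (l - 1)) (Fin (l - 1)) ℤ)) →
      ∀ (i : ℕ) (his : i < s) (hil : i < l - 1),
        ((Q₁ : Matrix (Fin s) (Fin s) ℤ) * X *
            ((P₁⁻¹ : Matrix.GeneralLinearGroup (Fin l) ℤ) : Matrix (Fin l) (Fin l) ℤ))
            ⟨i, his⟩ ⟨i, by omega⟩ =
          ((Q₂ : Matrix (Fin s) (Fin s) ℤ) * eraseFirstCol X *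
            ((P₂⁻¹ : Matrix.GeneralLinearGroup (Fin (l - 1)) ℤ) :
              Matrix (Fin (l - 1)) (Fin (l - 1)) ℤ)) ⟨i, his⟩ ⟨i, hil⟩) := by
  obtain ⟨m, rfl⟩ : ∃ m, l = m + 1 := ⟨l - 1, by omega⟩
  obtain ⟨S, hS⟩ := exists_mul_eq_eraseFirstCol X
  obtain ⟨R, hR⟩ := exists_eraseFirstCol_mul_eq X hX
  have hgcd (k : ℕ) : gcdMinors k X = gcdMinors k (eraseFirstCol X) := by
    refine Int.dvd_antisymm (gcdMinors_nonneg _ _) (gcdMinors_nonneg _ _) ?_ ?_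
    · simpa only [hS] using gcdMinors_dvd_mul_right k X S
    · simpa only [hR] using gcdMinors_dvd_mul_right k (eraseFirstCol X) R
  refine ⟨fun k _ => hgcd k, ?_, ?_⟩
  · exact le_antisymm (by simpa only [hR] using rank_mul_le_left (eraseFirstCol X) R)
      (by simpa only [hS] using rank_mul_le_left X S)
  · intro Q₁ P₁ Q₂ P₂ h₁ h₂ i his hil
    have hdiag := h₁.diagSeq_eq_of_gcdMinors_eq h₂ fun k => by
      rw [gcdMinors_units_mul_mul, gcdMinors_units_mul_mul, hgcd]
    have hi := congrFun hdiag i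
    rwa [diagSeq_of_lt _ his (by omega), diagSeq_of_lt _ his hil] at hi
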